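/- arXiv:1703.02082 — 2 statements merged into one kernel-verified Lean document; each statement's English description precedes it below -/
import Mathlib

section
/- Let f, g : ℕ → Bool with infinitely many true values each, such that f⁻¹(true) ⊆ g⁻¹(true). Suppose n, k ∈ ℕ are such that I_k(f) ∈ I(g), i.e., I_k(f) equals some interval of I(g), and |g⁻¹(true) ∩ [0, min I_k(f))| = |f⁻¹(true) ∩ [0, min I_k(f))| + n. Then I_k(f) = I_{k+n}(g). -/
theorem interval_index_shift (f g : ℕ → Bool) (k n : ℕ)
    (hf : {j : ℕ | f j = true}.Infinite)
    (hg : {j : ℕ | g j = true}.Infinite)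
    (hfg : {j : ℕ | f j = true} ⊆ {j : ℕ | g j = true})
    (hint : ∃ m : ℕ,
      {j : ℕ | ((Finset.range j).filter (fun i => f i = true)).card = k}
        = {j : ℕ | ((Finset.range j).filter (fun i => g i = true)).card = m})
    (hcount :
      ((Finset.range (sInf {j : ℕ |
          ((Finset.range j).filter (fun i => f i = true)).card = k})).filter
        (fun i => g i = true)).card
      = ((Finset.range (sInf {j : ℕ |
          ((Finset.range j).filter (fun i => f i = true)).card = k})).filter
        (fun i => f i = true)).card + n) :
    {j : ℕ | ((Finset.range j).filter (fun i => f i = true)).card = k}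
      = {j : ℕ | ((Finset.range j).filter (fun i => g i = true)).card = k + n} := by
  obtain ⟨m, hm⟩ := hint
  set S := {j : ℕ | ((Finset.range j).filter (fun i => f i = true)).card = k} with hS
  have hne : S.Nonempty := by
    refine ⟨Nat.nth (fun i => f i = true) k, ?_⟩
    have := Nat.count_nth_of_infinite (p := fun i => f i = true) hf k
    rwa [Nat.count_eq_card_filter_range] at this
  have hmem : sInf S ∈ S := Nat.sInf_mem hne
  have hmemg : sInf S ∈ {j : ℕ | ((Finset.range j).filter (fun i => g i = true)).card = m} := by
    rw [← hm]; exact hmem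
  have hk : ((Finset.range (sInf S)).filter (fun i => f i = true)).card = k := hmem
  have hmk : m = k + n := by
    have : ((Finset.range (sInf S)).filter (fun i => g i = true)).card = m := hmemg
    omega
  rw [hm, hmk]
end

section
/- Let 𝒰 be a nonprincipal ultrafilter on ℕ and let 𝒟 = {dⁿ : n ∈ ℕ} ⊆ 𝒰 be a countable subset with the following property: for every function f : ℕ → ℕ there is an interval partition {aₙ : n ∈ ℕ} of ℕ (given by a strictly increasing sequence of endpoints starting at 0) such that f(n) < min a_{n+1} for each n, and ⋃ₙ (aₙ ∩ dⁿ) ∉ 𝒰. Then 𝒟 has no pseudointersection belonging to 𝒰; in particular 𝒰 is not a P-point. -/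
def IsPPoint (U : Ultrafilter ℕ) : Prop :=
  ∀ d : ℕ → Set ℕ, (∀ n, d n ∈ U) → ∃ Z ∈ U, ∀ n, (Z \ d n).Finite

theorem no_pseudointersection_of_interval_property (U : Ultrafilter ℕ)
    (hU : ∀ s : Set ℕ, s.Finite → s ∉ U)
    (d : ℕ → Set ℕ) (hd : ∀ n, d n ∈ U)
    (hprop : ∀ f : ℕ → ℕ, ∃ m : ℕ → ℕ, m 0 = 0 ∧ StrictMono m ∧
      (∀ n, f n < m (n + 1)) ∧
      (⋃ n, Set.Ico (m n) (m (n + 1)) ∩ d n) ∉ U) :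
    (¬ ∃ Z ∈ U, ∀ n, (Z \ d n).Finite) ∧ ¬ IsPPoint U := by
  have main : ¬ ∃ Z ∈ U, ∀ n, (Z \ d n).Finite := by
    rintro ⟨Z, hZ, hfin⟩
    choose f hf using fun n => (hfin (n + 1)).bddAbove
    obtain ⟨m, hm0, hmono, hfm, hnotU⟩ := hprop f
    apply hnotU
    have hsub : Z ∩ {x | m 1 ≤ x} ⊆ ⋃ n, Set.Ico (m n) (m (n + 1)) ∩ d n := by
      rintro x ⟨hxZ, hx1⟩
      have hub : ∀ k, k ≤ m k := fun k => hmono.le_apply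
      have hex : ∃ n, x < m n := ⟨x + 1, lt_of_lt_of_le (Nat.lt_succ_self x) (hub _)⟩
      have hxn : x < m (Nat.find hex) := Nat.find_spec hex
      have hn2 : 2 ≤ Nat.find hex := by
        rcases Nat.lt_or_ge (Nat.find hex) 2 with h | h
        · exfalso
          interval_cases h' : Nat.find hex
          · rw [hm0] at hxn; omega
          · exact absurd hxn (not_lt.2 hx1)
        · exact h
      obtain ⟨j, hj⟩ : ∃ j, Nat.find hex = j + 2 := ⟨Nat.find hex - 2, by omega⟩
      have hmle : m (j + 1) ≤ x := by
        by_contra h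
        push_neg at h
        have : Nat.find hex ≤ j + 1 := Nat.find_le h
        omega
      rw [hj] at hxn
      refine Set.mem_iUnion.2 ⟨j + 1, ⟨hmle, hxn⟩, ?_⟩
      by_contra hxd
      have h1 : x ≤ f j := hf j ⟨hxZ, hxd⟩
      have h2 : f j < m (j + 1) := hfm j
      omega
    refine Filter.mem_of_superset ?_ hsub
    have hcofin : {x : ℕ | m 1 ≤ x} ∈ U := by
      have hfinlt : {x : ℕ | x < m 1}.Finite := Set.finite_lt_nat _
      have : {x : ℕ | x < m 1}ᶜ ∈ U := Ultrafilter.compl_mem_iff_notMem.2 (hU _ hfinlt)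
      convert this using 1
      ext x; simp
    exact Filter.inter_mem hZ hcofin
  exact ⟨main, fun hP => main (hP d hd)⟩
end
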